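/- Soundness of compositions (general theorem): for every composition tree Π over an environment E built using the rules AND, CASE, SEQ, AX, ENV (with valid applicability conditions witnessed by sound operators), with main sequent s(x) :: P ⇒ Q, the extracted function Φ_s uniformly solves s in every model M of E. The proof is by induction on the structure of Π. -/

import Mathlib

namespace ITSem

inductive Concept (NC NR : Type) : Type where
  | atom : NC → Concept NC NR
  | neg : Concept NC NR → Concept NC NR
  | inter : Concept NC NR → Concept NC NR → Concept NC NR
  | union : Concept NC NR → Concept NC NR → Concept NC NR
  | ex : NR → Concept NC NR → Concept NC NR
  | all : NR → Concept NC NR → Concept NC NR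

inductive Formula (N NC NR : Type) : Type where
  | bot : Formula N NC NR
  | role : N → N → NR → Formula N NC NR
  | conc : N → Concept NC NR → Formula N NC NR
  | subsum : NC → Concept NC NR → Formula N NC NR

structure Model (N NC NR : Type) where
  D : Type
  dNonempty : Nonempty D
  indiv : N → D
  cname : NC → Set D
  rel : NR → D → D → Prop

def Model.interp {N NC NR : Type} (M : Model N NC NR) : Concept NC NR → Set M.D
  | .atom A => M.cname A
  | .neg C => (M.interp C)ᶜ
  | .inter C D => M.interp C ∩ M.interp D
  | .union C D => M.interp C ∪ M.interp D
  | .ex R C => {x | ∃ y, M.rel R x y ∧ y ∈ M.interp C}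
  | .all R C => {x | ∀ y, M.rel R x y → y ∈ M.interp C}

def Model.valid {N NC NR : Type} (M : Model N NC NR) : Formula N NC NR → Prop
  | .bot => False
  | .role c d R => M.rel R (M.indiv c) (M.indiv d)
  | .conc c C => M.indiv c ∈ M.interp C
  | .subsum A C => M.cname A ⊆ M.interp C

def ITc (N NC NR : Type) : Concept NC NR → Type
  | .atom _ => Unit
  | .neg _ => Unit
  | .inter C D => ITc N NC NR C × ITc N NC NR D
  | .union C D => ITc N NC NR C ⊕ ITc N NC NR D
  | .ex _ C => N × ITc N NC NR C
  | .all _ C => N → ITc N NC NR C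

def ITf (N NC NR : Type) : Formula N NC NR → Type
  | .bot => Unit
  | .role _ _ _ => Unit
  | .conc _ C => ITc N NC NR C
  | .subsum _ C => N → ITc N NC NR C

def realc {N NC NR : Type} (M : Model N NC NR) :
    (C : Concept NC NR) → N → ITc N NC NR C → Prop
  | .atom A, c, _ => M.indiv c ∈ M.cname A
  | .neg C, c, _ => M.indiv c ∈ M.interp (.neg C)
  | .inter C D, c, η => realc M C c η.1 ∧ realc M D c η.2
  | .union C D, c, η =>
      match η with
      | Sum.inl α => realc M C c α
      | Sum.inr β => realc M D c β
  | .ex R C, c, η => M.rel R (M.indiv c) (M.indiv η.1) ∧ realc M C η.1 η.2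
  | .all R C, c, φ =>
      M.indiv c ∈ M.interp (.all R C) ∧
      ∀ d, M.rel R (M.indiv c) (M.indiv d) → realc M C d (φ d)

def real {N NC NR : Type} (M : Model N NC NR) :
    (K : Formula N NC NR) → ITf N NC NR K → Prop
  | .bot, _ => False
  | .role c d R, _ => M.rel R (M.indiv c) (M.indiv d)
  | .conc c C, η => realc M C c η
  | .subsum A C, φ =>
      M.cname A ⊆ M.interp C ∧
      ∀ d, M.indiv d ∈ M.cname A → realc M C d (φ d)

def ITl (N NC NR : Type) : List (Formula N NC NR) → Type
  | [] => PUnit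
  | K :: Γ => ITf N NC NR K × ITl N NC NR Γ

def reall {N NC NR : Type} (M : Model N NC NR) :
    (Γ : List (Formula N NC NR)) → ITl N NC NR Γ → Prop
  | [], _ => True
  | K :: Γ, η => real M K η.1 ∧ reall M Γ η.2

def splitIT {N NC NR : Type} :
    (Γ₁ Γ₂ : List (Formula N NC NR)) → ITl N NC NR (Γ₁ ++ Γ₂) →
      ITl N NC NR Γ₁ × ITl N NC NR Γ₂
  | [], _, γ => (PUnit.unit, γ)
  | _ :: Γ₁, Γ₂, γ => ((γ.1, (splitIT Γ₁ Γ₂ γ.2).1), (splitIT Γ₁ Γ₂ γ.2).2)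

structure Env (N NC NR : Type) (n : ℕ) where
  T : List (Formula N NC NR)
  η : ITl N NC NR T
  pre : Fin n → Concept NC NR
  post : Fin n → Concept NC NR
  impl : (i : Fin n) → ITc N NC NR (pre i) → ITc N NC NR (post i)

def UniformlySolves {N NC NR : Type} (M : Model N NC NR) (P Q : Concept NC NR)
    (Φ : ITc N NC NR P → ITc N NC NR Q) : Prop :=
  ∀ (t : N) (α : ITc N NC NR P), realc M P t α → realc M Q t (Φ α)

def Env.IsModel {N NC NR : Type} {n : ℕ} (E : Env N NC NR n) (M : Model N NC NR) : Prop :=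
  reall M E.T E.η ∧ ∀ i, UniformlySolves M (E.pre i) (E.post i) (E.impl i)

inductive Comp {N NC NR : Type} {n : ℕ} (E : Env N NC NR n) :
    Concept NC NR → Concept NC NR → Type 1 where
  | env (i : Fin n) : Comp E (E.pre i) (E.post i)
  | ax (A B : Concept NC NR) (Φ : ITc N NC NR A → ITc N NC NR B)
      (h : ∀ (M : Model N NC NR), E.IsModel M →
        ∀ (x : N) α, realc M A x α → realc M B x (Φ α)) : Comp E A B
  | and (A B : Concept NC NR) {m : ℕ} (As Bs : Fin m → Concept NC NR)
      (Φa : (k : Fin m) → ITc N NC NR A → ITc N NC NR (As k))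
      (Φb : ((k : Fin m) → ITc N NC NR (Bs k)) → ITc N NC NR B)
      (ha : ∀ (M : Model N NC NR), E.IsModel M → ∀ (k : Fin m) (x : N) α,
        realc M A x α → realc M (As k) x (Φa k α))
      (hb : ∀ (M : Model N NC NR), E.IsModel M →
        ∀ (x : N) (β : (k : Fin m) → ITc N NC NR (Bs k)),
          (∀ k, realc M (Bs k) x (β k)) → realc M B x (Φb β))
      (subs : (k : Fin m) → Comp E (As k) (Bs k)) : Comp E A B
  | case (A B : Concept NC NR) {m : ℕ} (As Bs : Fin m → Concept NC NR)
      (Φa : ITc N NC NR A → Σ k : Fin m, ITc N NC NR (As k))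
      (Φb : (k : Fin m) → ITc N NC NR (Bs k) → ITc N NC NR B)
      (ha : ∀ (M : Model N NC NR), E.IsModel M → ∀ (x : N) α,
        realc M A x α → realc M (As (Φa α).1) x (Φa α).2)
      (hb : ∀ (M : Model N NC NR), E.IsModel M → ∀ (k : Fin m) (x : N) β,
        realc M (Bs k) x β → realc M B x (Φb k β))
      (subs : (k : Fin m) → Comp E (As k) (Bs k)) : Comp E A B
  | seq (A A₁ B₁ A₂ B₂ B : Concept NC NR)
      (Φb1 : ITc N NC NR A → ITc N NC NR A₁)
      (Φb2 : ITc N NC NR B₁ → ITc N NC NR A₂)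
      (Φc : ITc N NC NR B₂ → ITc N NC NR B)
      (hb1 : ∀ (M : Model N NC NR), E.IsModel M → ∀ (x : N) α,
        realc M A x α → realc M A₁ x (Φb1 α))
      (hb2 : ∀ (M : Model N NC NR), E.IsModel M → ∀ (x : N) β,
        realc M B₁ x β → realc M A₂ x (Φb2 β))
      (hc : ∀ (M : Model N NC NR), E.IsModel M → ∀ (x : N) β,
        realc M B₂ x β → realc M B x (Φc β))
      (sub1 : Comp E A₁ B₁) (sub2 : Comp E A₂ B₂) : Comp E A B

def Comp.extract {N NC NR : Type} {n : ℕ} {E : Env N NC NR n}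
    {A B : Concept NC NR} : Comp E A B → (ITc N NC NR A → ITc N NC NR B)
  | .env i => E.impl i
  | .ax _ _ Φ _ => Φ
  | .and _ _ _ _ Φa Φb _ _ subs =>
      fun α => Φb (fun k => (subs k).extract (Φa k α))
  | .case _ _ _ _ Φa Φb _ _ subs =>
      fun α => Φb (Φa α).1 ((subs (Φa α).1).extract (Φa α).2)
  | .seq _ _ _ _ _ _ Φb1 Φb2 Φc _ _ _ sub1 sub2 =>
      fun α => Φc (sub2.extract (Φb2 (sub1.extract (Φb1 α))))

section UniformlySolves

variable {N NC NR : Type} {M : Model N NC NR}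

theorem UniformlySolves.comp {A B C : Concept NC NR} {g : ITc N NC NR B → ITc N NC NR C}
    {f : ITc N NC NR A → ITc N NC NR B} (hg : UniformlySolves M B C g)
    (hf : UniformlySolves M A B f) : UniformlySolves M A C (g ∘ f) :=
  fun t α hα => hg t _ (hf t α hα)

theorem UniformlySolves.pi {ι : Type*} {A B : Concept NC NR} {As Bs : ι → Concept NC NR}
    {Φa : (k : ι) → ITc N NC NR A → ITc N NC NR (As k)}
    {Ψ : (k : ι) → ITc N NC NR (As k) → ITc N NC NR (Bs k)}
    {Φb : ((k : ι) → ITc N NC NR (Bs k)) → ITc N NC NR B}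
    (ha : ∀ k, UniformlySolves M A (As k) (Φa k))
    (hΨ : ∀ k, UniformlySolves M (As k) (Bs k) (Ψ k))
    (hb : ∀ (t : N) (β : (k : ι) → ITc N NC NR (Bs k)),
      (∀ k, realc M (Bs k) t (β k)) → realc M B t (Φb β)) :
    UniformlySolves M A B (fun α => Φb fun k => Ψ k (Φa k α)) :=
  fun t α hα => hb t _ fun k => hΨ k t _ (ha k t α hα)

theorem UniformlySolves.sigma {ι : Type*} {A B : Concept NC NR} {As Bs : ι → Concept NC NR}
    {Φa : ITc N NC NR A → Σ k, ITc N NC NR (As k)}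
    {Ψ : (k : ι) → ITc N NC NR (As k) → ITc N NC NR (Bs k)}
    {Φb : (k : ι) → ITc N NC NR (Bs k) → ITc N NC NR B}
    (ha : ∀ (t : N) α, realc M A t α → realc M (As (Φa α).1) t (Φa α).2)
    (hΨ : ∀ k, UniformlySolves M (As k) (Bs k) (Ψ k))
    (hb : ∀ k, UniformlySolves M (Bs k) B (Φb k)) :
    UniformlySolves M A B (fun α => Φb (Φa α).1 (Ψ (Φa α).1 (Φa α).2)) :=
  fun t α hα => hb _ t _ (hΨ _ t _ (ha t α hα))

end UniformlySolves

theorem composition_sound {N NC NR : Type} {n : ℕ} (E : Env N NC NR n)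
    (A B : Concept NC NR) (comp : Comp E A B) :
    ∀ (M : Model N NC NR), E.IsModel M → UniformlySolves M A B comp.extract := by
  intro M hM
  induction comp with
  | env i => exact hM.2 i
  | ax _ _ _ h => exact h M hM
  | and _ _ _ _ _ _ ha hb _ ih => exact .pi (ha M hM) ih (hb M hM)
  | case _ _ _ _ _ _ ha hb _ ih => exact .sigma (ha M hM) ih (hb M hM)
  | seq _ _ _ _ _ _ _ _ _ hb1 hb2 hc _ _ ih1 ih2 =>
      exact .comp (hc M hM) <| .comp ih2 <| .comp (hb2 M hM) <| .comp ih1 (hb1 M hM)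

end ITSem
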